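/- Semantic well-formed pairs: if (H, ρ) is a well-interpreted environment for Γ in the pair-extended F<:^DR calculus, then for every type T, the interpretation ⟦T⟧ρ satisfies the well-formed pair property WFPair. -/

import Mathlib

/-- Selectors for selection paths (pair-extended calculus). -/
inductive Sel
  | dom | ran | fst | snd
  deriving DecidableEq

/-- A selection path is a finite list of selectors. -/
abbrev SelPath := List Sel

/-- Path positivity: flipped by `dom`, preserved by `ran`, `fst`, `snd`. -/
def pos : SelPath → Bool
  | [] => true
  | .dom :: s => !(pos s)
  | .ran :: s => pos s
  | .fst :: s => pos s
  | .snd :: s => pos s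

/-- Types of the pair-extended F<:^DR. -/
inductive Ty
  | base | top | bot
  | tvar : Nat → Ty
  | arrow : Ty → Ty → Ty
  | all : Ty → Ty → Ty
  | dom : Ty → Ty
  | range : Ty → Ty
  | prod : Ty → Ty → Ty
  | fst : Ty → Ty
  | snd : Ty → Ty
  deriving DecidableEq

/-- Terms of the pair-extended F<:^DR. -/
inductive Tm
  | cst
  | var : Nat → Tm
  | abs : Tm → Tm
  | app : Tm → Tm → Tm
  | tabs : Tm → Tm
  | tapp : Tm → Ty → Tm
  | pair : Tm → Tm → Tm
  | fst : Tm → Tm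
  | snd : Tm → Tm
  deriving DecidableEq

/-- Values. -/
inductive Val
  | cst
  | clos : List Val → Tm → Val
  | tclos : List Val → Tm → Val
  | pair : Val → Val → Val

/-- Big-step evaluation. -/
inductive Eval : List Val → Tm → Val → Prop
  | cst : Eval H .cst .cst
  | var : H[x]? = some v → Eval H (.var x) v
  | abs : Eval H (.abs t) (.clos H t)
  | tabs : Eval H (.tabs t) (.tclos H t)
  | app : Eval H t₁ (.clos H' t') → Eval H t₂ vx → Eval (vx :: H') t' v →
      Eval H (.app t₁ t₂) v
  | tapp : Eval H t (.tclos H' t') → Eval H' t' v → Eval H (.tapp t T) v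
  | pair : Eval H t₁ v₁ → Eval H t₂ v₂ → Eval H (.pair t₁ t₂) (.pair v₁ v₂)
  | fst : Eval H t (.pair v₁ v₂) → Eval H (.fst t) v₁
  | snd : Eval H t (.pair v₁ v₂) → Eval H (.snd t) v₂

/-- A value type: a set of (value, selection path) pairs. -/
abbrev VTy := Set (Val × SelPath)

/-- Projection of a value type at a selection path. -/
def proj (V : VTy) (s : SelPath) : Set Val := {v | (v, s) ∈ V}

/-- Sub-value-interpretation relation `≤ₛ`. -/
def vstp (V₁ V₂ : VTy) : Prop :=
  ∀ s : SelPath, (pos s = true → proj V₁ s ⊆ proj V₂ s) ∧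
    (pos s = false → proj V₂ s ⊆ proj V₁ s)

/-- Well-formed functionality property. -/
def WFFun (V : VTy) : Prop :=
  ∀ v s, (v, s) ∈ V → ∀ v₁, (v₁, s ++ [Sel.dom]) ∈ V →
    ∃ H t, v = Val.clos H t ∧
      ∃ v₂, Eval (v₁ :: H) t v₂ ∧ (v₂, s ++ [Sel.ran]) ∈ V

/-- Well-formed pair property. -/
def WFPair (V : VTy) : Prop :=
  ∀ v₁ v₂ s, (Val.pair v₁ v₂, s) ∈ V →
    (v₁, s ++ [Sel.fst]) ∈ V ∧ (v₂, s ++ [Sel.snd]) ∈ V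

/-- Value interpretation of types, with delayed projections via selection paths. -/
def interp : Ty → List VTy → SelPath → Set Val
  | .base, _, [] => {Val.cst}
  | .base, _, sl :: s => if pos (sl :: s) then Set.univ else ∅
  | .top, _, s => if pos s then Set.univ else ∅
  | .bot, _, s => if pos s then ∅ else Set.univ
  | .tvar X, ρ, s => {v | ∃ V, ρ[X]? = some V ∧ (v, s) ∈ V}
  | .arrow T₁ T₂, ρ, [] =>
      {v | ∃ H t, v = Val.clos H t ∧
        ∀ v₁ ∈ interp T₁ ρ [], ∃ v₂, Eval (v₁ :: H) t v₂ ∧ v₂ ∈ interp T₂ ρ []}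
  | .arrow T₁ _, ρ, .dom :: s => interp T₁ ρ s
  | .arrow _ T₂, ρ, .ran :: s => interp T₂ ρ s
  | .arrow _ _, _, sl :: s =>
      if pos (sl :: s) then Set.univ else ∅
  | .dom T, ρ, s => interp T ρ (.dom :: s)
  | .range T, ρ, s => interp T ρ (.ran :: s)
  | .prod T₁ T₂, ρ, [] =>
      {v | ∃ v₁ v₂, v = Val.pair v₁ v₂ ∧
        v₁ ∈ interp T₁ ρ [] ∧ v₂ ∈ interp T₂ ρ []}
  | .prod T₁ _, ρ, .fst :: s => interp T₁ ρ s
  | .prod _ T₂, ρ, .snd :: s => interp T₂ ρ s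
  | .prod _ _, _, sl :: s => if pos (sl :: s) then Set.univ else ∅
  | .fst T, ρ, s => interp T ρ (.fst :: s)
  | .snd T, ρ, s => interp T ρ (.snd :: s)
  | .all U T, ρ, [] =>
      {v | ∃ H t, v = Val.tclos H t ∧
        ∀ V : VTy, WFFun V → WFPair V → vstp V {p | p.1 ∈ interp U ρ p.2} →
          ∃ v', Eval H t v' ∧ v' ∈ interp T (V :: ρ) []}
  | .all _ _, _, sl :: s => if pos (sl :: s) then Set.univ else ∅

/-- Interpretation of a type as a value type. -/
def interpV (ρ : List VTy) (T : Ty) : VTy := {p | p.1 ∈ interp T ρ p.2}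

/-- Shifting of type variables `≥ c` by `d`. -/
def shiftTy (d : Nat) : Ty → Nat → Ty
  | .base, _ => .base
  | .top, _ => .top
  | .bot, _ => .bot
  | .tvar X, c => if c ≤ X then .tvar (X + d) else .tvar X
  | .arrow a b, c => .arrow (shiftTy d a c) (shiftTy d b c)
  | .all u t, c => .all (shiftTy d u c) (shiftTy d t (c + 1))
  | .dom t, c => .dom (shiftTy d t c)
  | .range t, c => .range (shiftTy d t c)
  | .prod a b, c => .prod (shiftTy d a c) (shiftTy d b c)
  | .fst t, c => .fst (shiftTy d t c)
  | .snd t, c => .snd (shiftTy d t c)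

/-- Substitution of `U` for type variable `k`. -/
def substTy (U : Ty) : Ty → Nat → Ty
  | .base, _ => .base
  | .top, _ => .top
  | .bot, _ => .bot
  | .tvar X, k => if X = k then shiftTy k U 0
      else if k < X then .tvar (X - 1) else .tvar X
  | .arrow a b, k => .arrow (substTy U a k) (substTy U b k)
  | .all u t, k => .all (substTy U u k) (substTy U t (k + 1))
  | .dom t, k => .dom (substTy U t k)
  | .range t, k => .range (substTy U t k)
  | .prod a b, k => .prod (substTy U a k) (substTy U b k)
  | .fst t, k => .fst (substTy U t k)
  | .snd t, k => .snd (substTy U t k)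

/-- Subtyping of the pair-extended F<:^DR. -/
inductive Stp : List Ty → Ty → Ty → Prop
  | top : Stp Δ T .top
  | bot : Stp Δ .bot T
  | refl : Stp Δ T T
  | trans : Stp Δ T₁ T₂ → Stp Δ T₂ T₃ → Stp Δ T₁ T₃
  | tvar : Δ[X]? = some U → Stp Δ (.tvar X) (shiftTy (X + 1) U 0)
  | arrow : Stp Δ T₁ S₁ → Stp Δ S₂ T₂ → Stp Δ (.arrow S₁ S₂) (.arrow T₁ T₂)
  | all : Stp (U :: Δ) S T → Stp Δ (.all U S) (.all U T)
  | domIntro : Stp Δ T₁ (.dom (.arrow T₁ T₂))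
  | domElim : Stp Δ (.dom (.arrow T₁ T₂)) T₁
  | ranIntro : Stp Δ T₂ (.range (.arrow T₁ T₂))
  | ranElim : Stp Δ (.range (.arrow T₁ T₂)) T₂
  | domCongr : Stp Δ T S → Stp Δ (.dom S) (.dom T)
  | ranCongr : Stp Δ S T → Stp Δ (.range S) (.range T)
  | pair : Stp Δ S₁ T₁ → Stp Δ S₂ T₂ → Stp Δ (.prod S₁ S₂) (.prod T₁ T₂)
  | fstIntro : Stp Δ T₁ (.fst (.prod T₁ T₂))
  | fstElim : Stp Δ (.fst (.prod T₁ T₂)) T₁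
  | sndIntro : Stp Δ T₂ (.snd (.prod T₁ T₂))
  | sndElim : Stp Δ (.snd (.prod T₁ T₂)) T₂
  | fstCongr : Stp Δ T₁ T₂ → Stp Δ (.fst T₁) (.fst T₂)
  | sndCongr : Stp Δ T₁ T₂ → Stp Δ (.snd T₁) (.snd T₂)

/-- Typing of the pair-extended F<:^DR. -/
inductive HasType : List Ty → List Ty → Tm → Ty → Prop
  | cst : HasType Δ Γ .cst .base
  | var : Γ[x]? = some T → HasType Δ Γ (.var x) T
  | sub : HasType Δ Γ t T₁ → Stp Δ T₁ T₂ → HasType Δ Γ t T₂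
  | abs : HasType Δ (T₁ :: Γ) t T₂ → HasType Δ Γ (.abs t) (.arrow T₁ T₂)
  | appDR : HasType Δ Γ f F → HasType Δ Γ t (.dom F) →
      HasType Δ Γ (.app f t) (.range F)
  | tabs : HasType (U :: Δ) Γ t T → HasType Δ Γ (.tabs t) (.all U T)
  | tapp : Stp Δ S U → HasType Δ Γ f (.all U T) →
      HasType Δ Γ (.tapp f S) (substTy S T 0)
  | pair : HasType Δ Γ t₁ T₁ → HasType Δ Γ t₂ T₂ →
      HasType Δ Γ (.pair t₁ t₂) (.prod T₁ T₂)
  | fst : HasType Δ Γ t T → Stp Δ T (.prod T₁ T₂) →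
      HasType Δ Γ (.fst t) (.fst T)
  | snd : HasType Δ Γ t T → Stp Δ T (.prod T₁ T₂) →
      HasType Δ Γ (.snd t) (.snd T)

/-- Environment interpretation. -/
def EnvOK (Δ Γ : List Ty) (H : List Val) (ρ : List VTy) : Prop :=
  H.length = Γ.length ∧ ρ.length = Δ.length ∧
  (∀ x T, Γ[(x : Nat)]? = some T → ∃ v, H[x]? = some v ∧ v ∈ interp T ρ []) ∧
  (∀ X U, Δ[(X : Nat)]? = some U → ∃ V, ρ[X]? = some V ∧ WFFun V ∧ WFPair V ∧
    vstp V (interpV ρ U))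

/-- Semantic typing. -/
def SemType (Δ Γ : List Ty) (t : Tm) (T : Ty) : Prop :=
  ∀ H ρ, EnvOK Δ Γ H ρ → ∃ v, Eval H t v ∧ v ∈ interp T ρ []

/-! Pairs are built only at the root of a product type, and every other clause of `interp` either
hands the path on to a subterm (`dom`, `ran`, `fst`, `snd`, product components), reads it off a
type variable, or depends on the path only through its polarity. Appending `fst` or `snd` does not
change the polarity, so an induction on the type gives `WFPair`, provided every interpretation
of a type variable is itself `WFPair`, which is what a well-interpreted environment supplies. -/

theorem pos_append (s t : SelPath) : pos (s ++ t) = (pos s == pos t) := by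
  induction s with
  | nil => simp [pos]
  | cons sl s ih =>
    cases sl <;> simp only [List.cons_append, pos, ih]
    cases pos s <;> cases pos t <;> rfl

@[simp]
theorem pos_append_fst (s : SelPath) : pos (s ++ [Sel.fst]) = pos s := by
  simp [pos_append, pos]

@[simp]
theorem pos_append_snd (s : SelPath) : pos (s ++ [Sel.snd]) = pos s := by
  simp [pos_append, pos]

theorem pair_mem_ite_pos_append {s : SelPath} {v₁ v₂ : Val}
    (h : Val.pair v₁ v₂ ∈ (if pos s then Set.univ else ∅ : Set Val)) :
    v₁ ∈ (if pos (s ++ [Sel.fst]) then Set.univ else ∅ : Set Val) ∧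
      v₂ ∈ (if pos (s ++ [Sel.snd]) then Set.univ else ∅ : Set Val) := by
  simpa using h

theorem wfPair_interpV {ρ : List VTy} (hρ : ∀ V ∈ ρ, WFPair V) (T : Ty) :
    WFPair (interpV ρ T) := by
  induction T with
  | tvar X =>
    rintro v₁ v₂ s ⟨V, hX, hV⟩
    obtain ⟨h₁, h₂⟩ := hρ V (List.mem_of_getElem? hX) v₁ v₂ s hV
    exact ⟨⟨V, hX, h₁⟩, ⟨V, hX, h₂⟩⟩
  | dom T ih => exact fun v₁ v₂ s h => ih v₁ v₂ (.dom :: s) h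
  | range T ih => exact fun v₁ v₂ s h => ih v₁ v₂ (.ran :: s) h
  | fst T ih => exact fun v₁ v₂ s h => ih v₁ v₂ (.fst :: s) h
  | snd T ih => exact fun v₁ v₂ s h => ih v₁ v₂ (.snd :: s) h
  | top => exact fun v₁ v₂ s h => pair_mem_ite_pos_append h
  | bot =>
    intro v₁ v₂ s h
    simpa [interpV, interp] using h
  | base =>
    rintro v₁ v₂ (_ | s) h
    · simp [interpV, interp] at h
    · exact pair_mem_ite_pos_append h
  | all U T =>
    rintro v₁ v₂ (_ | s) h
    · obtain ⟨_, _, ⟨⟩, -⟩ := h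
    · exact pair_mem_ite_pos_append h
  | arrow T₁ T₂ ih₁ ih₂ =>
    rintro v₁ v₂ (_ | ⟨_ | _ | _ | _, s⟩) h
    · obtain ⟨_, _, ⟨⟩, -⟩ := h
    case cons.dom => exact ih₁ v₁ v₂ s h
    case cons.ran => exact ih₂ v₁ v₂ s h
    all_goals exact pair_mem_ite_pos_append h
  | prod T₁ T₂ ih₁ ih₂ =>
    rintro v₁ v₂ (_ | ⟨_ | _ | _ | _, s⟩) h
    · obtain ⟨_, _, ⟨⟩, h₁, h₂⟩ := h
      exact ⟨h₁, h₂⟩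
    case cons.fst => exact ih₁ v₁ v₂ s h
    case cons.snd => exact ih₂ v₁ v₂ s h
    all_goals exact pair_mem_ite_pos_append h

theorem EnvOK.wfPair_of_mem {Δ Γ : List Ty} {H : List Val} {ρ : List VTy}
    (hEnv : EnvOK Δ Γ H ρ) {V : VTy} (hV : V ∈ ρ) : WFPair V := by
  obtain ⟨X, hX, rfl⟩ := List.getElem_of_mem hV
  obtain ⟨-, hlen, -, hΔ⟩ := hEnv
  obtain ⟨V', hρX, -, hWF, -⟩ := hΔ X (Δ[X]'(by omega)) (List.getElem?_eq_getElem _)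
  rw [List.getElem?_eq_getElem hX, Option.some_inj] at hρX
  rwa [hρX]

/-- semantic well-formed pairs: under a well-interpreted
environment, every value interpretation satisfies `WFPair`. -/
theorem semantic_wfpair (Δ Γ : List Ty) (H : List Val) (ρ : List VTy)
    (hEnv : EnvOK Δ Γ H ρ) :
    ∀ T : Ty, WFPair (interpV ρ T) :=
  wfPair_interpV fun _ => hEnv.wfPair_of_mem
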